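/- Let a < b be real numbers, let L > 0, and let f : [a,b] → ℝ be a convex, L-Lipschitz function. Set x₁ = (3a+b)/4, x₂ = (a+b)/2, x₃ = (a+3b)/4, and let f(x*) = min_{x∈[a,b]} f(x). If there exist a constant A and Δ > 0 such that f(xᵢ) ∈ [A−Δ, A+Δ] for i = 1,2,3, then max{f(x₁), f(x₂), f(x₃)} − f(x*) ≤ 4Δ. -/
import Mathlib

lemma quaternary_key (a b : ℝ) (f : ℝ → ℝ) (hconv : ConvexOn ℝ (Set.Icc a b) f)
    (p q xs : ℝ) (hp : p ∈ Set.Icc a b) (hxs : xs ∈ Set.Icc a b)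
    (hmin : f xs ≤ f q) (Δ : ℝ) (hΔ : 0 < Δ) (hfp : f p - f q ≤ 2*Δ)
    (t : ℝ) (ht1 : 1/2 ≤ t) (ht2 : t ≤ 1) (heq : q = t*xs + (1-t)*p) :
    f q - f xs ≤ 2*Δ := by
  have hc := hconv.2 hxs hp (by linarith : (0:ℝ) ≤ t) (by linarith : (0:ℝ) ≤ 1 - t)
    (by ring)
  simp only [smul_eq_mul] at hc
  rw [← heq] at hc
  nlinarith [mul_nonneg (by linarith : (0:ℝ) ≤ 2*t - 1) (by linarith : (0:ℝ) ≤ f q - f xs),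
    mul_nonneg (by linarith : (0:ℝ) ≤ 1 - t) (by linarith : (0:ℝ) ≤ f q + 2*Δ - f p)]

/-- If a convex `L`-Lipschitz function `f` on `[a,b]` takes values within
`[A-Δ, A+Δ]` at the three quarter points `x₁ = (3a+b)/4`, `x₂ = (a+b)/2`,
`x₃ = (a+3b)/4`, then each of these values is within `4Δ` of the minimum of `f` on
`[a,b]`. -/
theorem quaternary_suboptimality
    (a b : ℝ) (hab : a < b) (L : NNReal) (hL : 0 < L)
    (f : ℝ → ℝ)
    (hconv : ConvexOn ℝ (Set.Icc a b) f)
    (hlip : LipschitzOnWith L f (Set.Icc a b))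
    (xs : ℝ) (hxs : xs ∈ Set.Icc a b) (hmin : ∀ x ∈ Set.Icc a b, f xs ≤ f x)
    (A Δ : ℝ) (hΔ : 0 < Δ)
    (h1 : f ((3*a+b)/4) ∈ Set.Icc (A - Δ) (A + Δ))
    (h2 : f ((a+b)/2) ∈ Set.Icc (A - Δ) (A + Δ))
    (h3 : f ((a+3*b)/4) ∈ Set.Icc (A - Δ) (A + Δ)) :
    max (max (f ((3*a+b)/4)) (f ((a+b)/2))) (f ((a+3*b)/4)) - f xs ≤ 4 * Δ := by
  obtain ⟨hxa, hxb⟩ := hxs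
  have h1m : (3*a+b)/4 ∈ Set.Icc a b := ⟨by linarith, by linarith⟩
  have h2m : (a+b)/2 ∈ Set.Icc a b := ⟨by linarith, by linarith⟩
  have h3m : (a+3*b)/4 ∈ Set.Icc a b := ⟨by linarith, by linarith⟩
  obtain ⟨h1l, h1u⟩ := h1
  obtain ⟨h2l, h2u⟩ := h2
  obtain ⟨h3l, h3u⟩ := h3
  have hfxs : A - 3*Δ ≤ f xs := by
    rcases le_total xs ((3*a+b)/4) with hc1 | hc1
    · -- q = x1, p = x2, t = (x2 - x1)/(x2 - xs)
      have hd : (0:ℝ) < (a+b)/2 - xs := by linarith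
      have key := quaternary_key a b f hconv ((a+b)/2) ((3*a+b)/4) xs h2m ⟨hxa, hxb⟩
        (hmin _ h1m) Δ hΔ (by linarith) (((a+b)/2 - (3*a+b)/4) / ((a+b)/2 - xs))
        (by rw [le_div_iff₀ hd]; linarith)
        (by rw [div_le_one hd]; linarith)
        (by have hm := div_mul_cancel₀ ((a+b)/2 - (3*a+b)/4) hd.ne'
            linear_combination hm)
      linarith
    · rcases le_total xs ((a+b)/2) with hc2 | hc2
      · -- q = x2, p = x3, t = (x3 - x2)/(x3 - xs)
        have hd : (0:ℝ) < (a+3*b)/4 - xs := by linarith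
        have key := quaternary_key a b f hconv ((a+3*b)/4) ((a+b)/2) xs h3m ⟨hxa, hxb⟩
          (hmin _ h2m) Δ hΔ (by linarith) (((a+3*b)/4 - (a+b)/2) / ((a+3*b)/4 - xs))
          (by rw [le_div_iff₀ hd]; linarith)
          (by rw [div_le_one hd]; linarith)
          (by have hm := div_mul_cancel₀ ((a+3*b)/4 - (a+b)/2) hd.ne'
              linear_combination hm)
        linarith
      · rcases le_total xs ((a+3*b)/4) with hc3 | hc3
        · -- q = x2, p = x1, t = (x2 - x1)/(xs - x1)
          have hd : (0:ℝ) < xs - (3*a+b)/4 := by linarith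
          have key := quaternary_key a b f hconv ((3*a+b)/4) ((a+b)/2) xs h1m ⟨hxa, hxb⟩
            (hmin _ h2m) Δ hΔ (by linarith) (((a+b)/2 - (3*a+b)/4) / (xs - (3*a+b)/4))
            (by rw [le_div_iff₀ hd]; linarith)
            (by rw [div_le_one hd]; linarith)
            (by have hm := div_mul_cancel₀ ((a+b)/2 - (3*a+b)/4) hd.ne'
                linear_combination -hm)
          linarith
        · -- q = x3, p = x2, t = (x3 - x2)/(xs - x2)
          have hd : (0:ℝ) < xs - (a+b)/2 := by linarith
          have key := quaternary_key a b f hconv ((a+b)/2) ((a+3*b)/4) xs h2m ⟨hxa, hxb⟩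
            (hmin _ h3m) Δ hΔ (by linarith) (((a+3*b)/4 - (a+b)/2) / (xs - (a+b)/2))
            (by rw [le_div_iff₀ hd]; linarith)
            (by rw [div_le_one hd]; linarith)
            (by have hm := div_mul_cancel₀ ((a+3*b)/4 - (a+b)/2) hd.ne'
                linear_combination -hm)
          linarith
  have hmax : max (max (f ((3*a+b)/4)) (f ((a+b)/2))) (f ((a+3*b)/4)) ≤ A + Δ :=
    max_le (max_le h1u h2u) h3u
  linarith
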